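/- Let n ≥ 3 and a ≥ 0 be natural numbers, and let H_a be the ℝ-submodule of MvPolynomial (Fin n) ℝ consisting of harmonic polynomials homogeneous of degree a. Then (n − 2)! * Module.finrank ℝ H_a = (2a + n − 2) * ∏_{j=1}^{n−3} (a + j). -/

import Mathlib

open MvPolynomial

/-- The space of harmonic polynomials homogeneous of degree `a` in `n` real variables. -/
noncomputable def harmonicHomogeneous (n a : ℕ) : Submodule ℝ (MvPolynomial (Fin n) ℝ) :=
  (homogeneousSubmodule (Fin n) ℝ a) ⊓
    LinearMap.ker (∑ i : Fin n, ((pderiv (R := ℝ) i).toLinearMap ∘ₗ (pderiv i).toLinearMap))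

/-!
For the Fischer pairing `⟨p, q⟩ = ∑_d d! p_d q_d`, multiplication by `Xᵢ` is adjoint to `∂ᵢ`,
so multiplication by `r² = ∑ Xᵢ²` is adjoint to the Laplacian `Δ`. The pairing is positive
definite, hence `Δ (r² q) = 0` forces `r² q = 0`. So `Δ ∘ (r² * ·)` is an injective, hence
bijective, endomorphism of the finite-dimensional space `P_b` of homogeneous polynomials of
degree `b`, and `Δ : P_{b+2} → P_b` is onto. Rank–nullity gives
`dim H_{b+2} = dim P_{b+2} - dim P_b`, while `H_a = P_a` for `a ≤ 1`; with
`dim P_a = binom(n + a - 1, a)` the formula becomes an identity between rising factorials.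
-/

namespace MvPolynomial

open Finset

variable {σ R : Type*}

section Fischer

variable [Fintype σ]

section CommSemiring

variable [CommSemiring R]

noncomputable def fischerWeight (d : σ →₀ ℕ) : R := ∏ i, ((d i).factorial : R)

noncomputable def fischer (p q : MvPolynomial σ R) : R :=
  ∑ d ∈ p.support, fischerWeight d * coeff d p * coeff d q

lemma fischer_eq_sum_of_support_subset {p : MvPolynomial σ R} (q : MvPolynomial σ R)
    {s : Finset (σ →₀ ℕ)} (hs : p.support ⊆ s) :
    fischer p q = ∑ d ∈ s, fischerWeight d * coeff d p * coeff d q :=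
  sum_subset hs fun d _ hd => by rw [notMem_support_iff.mp hd, mul_zero, zero_mul]

lemma fischer_comm (p q : MvPolynomial σ R) : fischer p q = fischer q p := by
  classical
  rw [fischer_eq_sum_of_support_subset q subset_union_left,
    fischer_eq_sum_of_support_subset p (subset_union_right (s₁ := p.support))]
  exact sum_congr rfl fun d _ => by ring

lemma fischer_add_left (p p' q : MvPolynomial σ R) :
    fischer (p + p') q = fischer p q + fischer p' q := by
  classical
  rw [fischer_eq_sum_of_support_subset q (support_add (p := p) (q := p')),
    fischer_eq_sum_of_support_subset q subset_union_left,
    fischer_eq_sum_of_support_subset q subset_union_right, ← sum_add_distrib]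
  exact sum_congr rfl fun d _ => by rw [coeff_add]; ring

lemma fischer_sum_right {ι : Type*} (p : MvPolynomial σ R) (s : Finset ι)
    (f : ι → MvPolynomial σ R) : fischer p (∑ x ∈ s, f x) = ∑ x ∈ s, fischer p (f x) := by
  simp only [fischer, coeff_sum, mul_sum]
  exact sum_comm

lemma fischer_sum_left {ι : Type*} (s : Finset ι) (f : ι → MvPolynomial σ R)
    (p : MvPolynomial σ R) : fischer (∑ x ∈ s, f x) p = ∑ x ∈ s, fischer (f x) p := by
  simp only [fischer_comm _ p, fischer_sum_right]

@[simp]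
lemma fischer_zero_right (p : MvPolynomial σ R) : fischer p 0 = 0 := by
  simp [fischer]

lemma fischer_monomial_left (d : σ →₀ ℕ) (c : R) (q : MvPolynomial σ R) :
    fischer (monomial d c) q = fischerWeight d * c * coeff d q := by
  classical
  rw [fischer_eq_sum_of_support_subset q support_monomial_subset, sum_singleton,
    coeff_monomial, if_pos rfl]

lemma fischerWeight_add_single [DecidableEq σ] (d : σ →₀ ℕ) (i : σ) :
    fischerWeight (d + Finsupp.single i 1) = ((d i : R) + 1) * fischerWeight d := by
  simp only [fischerWeight, ← mul_prod_erase univ _ (mem_univ i), Finsupp.add_apply,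
    Finsupp.single_eq_same, Nat.factorial_succ, Nat.cast_mul, Nat.cast_succ, mul_assoc]
  congr 2
  exact prod_congr rfl fun j hj => by rw [Finsupp.single_eq_of_ne (ne_of_mem_erase hj), add_zero]

lemma fischer_X_mul (i : σ) (p q : MvPolynomial σ R) :
    fischer (X i * p) q = fischer p (pderiv i q) := by
  classical
  induction p using MvPolynomial.induction_on' with
  | monomial d c =>
    rw [← pow_one (X i), ← monomial_single_add, add_comm, fischer_monomial_left,
      fischer_monomial_left, coeff_pderiv, fischerWeight_add_single]
    ring
  | add p p' hp hp' => rw [mul_add, fischer_add_left, fischer_add_left, hp, hp']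

end CommSemiring

lemma fischer_self_pos [CommRing R] [LinearOrder R] [IsStrictOrderedRing R]
    {p : MvPolynomial σ R} (hp : p ≠ 0) : 0 < fischer p p := by
  have hweight (d : σ →₀ ℕ) : 0 < (fischerWeight d : R) :=
    prod_pos fun i _ => by exact_mod_cast (d i).factorial_pos
  obtain ⟨d, hd⟩ := exists_coeff_ne_zero hp
  refine sum_pos' (fun d _ => ?_) ⟨d, mem_support_iff.mpr hd, ?_⟩
  · rw [mul_assoc]; exact mul_nonneg (hweight d).le (mul_self_nonneg _)
  · rw [mul_assoc]; exact mul_pos (hweight d) (mul_self_pos.mpr hd)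

end Fischer

section Laplacian

variable [Fintype σ]

section CommSemiring

variable [CommSemiring R]

variable (σ R) in
noncomputable def laplacian : MvPolynomial σ R →ₗ[R] MvPolynomial σ R :=
  ∑ i : σ, (pderiv i).toLinearMap ∘ₗ (pderiv i).toLinearMap

lemma laplacian_apply (p : MvPolynomial σ R) :
    laplacian σ R p = ∑ i, pderiv i (pderiv i p) := by
  simp [laplacian, LinearMap.sum_apply]

variable (σ R) in
noncomputable def radiusSq : MvPolynomial σ R := ∑ i, X i ^ 2

lemma isHomogeneous_radiusSq : (radiusSq σ R).IsHomogeneous 2 :=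
  IsHomogeneous.sum _ _ _ fun i _ => (isHomogeneous_X R i).pow 2

lemma IsHomogeneous.laplacian {p : MvPolynomial σ R} {a : ℕ} (hp : p.IsHomogeneous (a + 2)) :
    (laplacian σ R p).IsHomogeneous a := by
  rw [laplacian_apply]
  exact IsHomogeneous.sum _ _ _ fun i _ => hp.pderiv.pderiv

lemma homogeneousSubmodule_le_ker_laplacian {a : ℕ} (ha : a ≤ 1) :
    homogeneousSubmodule σ R a ≤ LinearMap.ker (laplacian σ R) := fun p hp => by
  rw [LinearMap.mem_ker, laplacian_apply]
  refine sum_eq_zero fun i _ => ?_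
  have hconst : (pderiv i p).IsHomogeneous 0 := by
    simpa [Nat.sub_eq_zero_of_le ha] using (mem_homogeneousSubmodule a p).mp hp |>.pderiv (i := i)
  rw [← totalDegree_zero_iff_isHomogeneous, totalDegree_eq_zero_iff_eq_C] at hconst
  rw [hconst, pderiv_C]

lemma fischer_radiusSq_mul (q p : MvPolynomial σ R) :
    fischer (radiusSq σ R * q) p = fischer q (laplacian σ R p) := by
  rw [radiusSq, sum_mul, fischer_sum_left, laplacian_apply, fischer_sum_right]
  exact sum_congr rfl fun i _ => by rw [pow_two, mul_assoc, fischer_X_mul, fischer_X_mul]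

end CommSemiring

variable [CommRing R] [LinearOrder R] [IsStrictOrderedRing R] [Nonempty σ]

lemma radiusSq_ne_zero : radiusSq σ R ≠ 0 := by
  intro h
  have := congrArg (eval fun _ => (1 : R)) h
  simp [radiusSq] at this

lemma eq_zero_of_laplacian_radiusSq_mul_eq_zero {q : MvPolynomial σ R}
    (h : laplacian σ R (radiusSq σ R * q) = 0) : q = 0 := by
  have hself : fischer (radiusSq σ R * q) (radiusSq σ R * q) = 0 := by
    rw [fischer_radiusSq_mul, h, fischer_zero_right]
  by_contra hq
  exact hself.not_gt (fischer_self_pos (mul_ne_zero radiusSq_ne_zero hq))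

end Laplacian

instance [Finite σ] [CommSemiring R] (a : ℕ) : Module.Finite R (homogeneousSubmodule σ R a) :=
  Module.Finite.iff_fg.mpr (homogeneousSubmodule_fg σ R a)

section Dimension

variable [Fintype σ] [Field R]

theorem finrank_homogeneousSubmodule (a : ℕ) :
    Module.finrank R (homogeneousSubmodule σ R a) = (Fintype.card σ + a - 1).choose a := by
  classical
  have hsupport : {d : σ →₀ ℕ | d.degree = a} = ↑((univ : Finset σ).finsuppAntidiag a) := by
    ext d
    simp [Finsupp.degree_eq_sum]
  rw [homogeneousSubmodule_eq_finsupp_supported, hsupport]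
  refine (Module.finrank_eq_card_basis (basisRestrictSupport R _)).trans ?_
  simpa using card_finsuppAntidiag_nat_eq_choose (s := univ) a

theorem factorial_mul_finrank_homogeneousSubmodule {k : ℕ} (hσ : Fintype.card σ = k + 1)
    (a : ℕ) :
    k.factorial * Module.finrank R (homogeneousSubmodule σ R a) = (a + 1).ascFactorial k := by
  rw [finrank_homogeneousSubmodule, hσ, Nat.ascFactorial_eq_factorial_mul_choose,
    Nat.add_right_comm, add_tsub_cancel_right, add_comm k a, Nat.choose_symm_add]

variable [LinearOrder R] [IsStrictOrderedRing R] [Nonempty σ]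

theorem finrank_harmonic_add_finrank_homogeneousSubmodule (b : ℕ) :
    Module.finrank R ↥(homogeneousSubmodule σ R (b + 2) ⊓ LinearMap.ker (laplacian σ R)) +
      Module.finrank R (homogeneousSubmodule σ R b) =
      Module.finrank R (homogeneousSubmodule σ R (b + 2)) := by
  set L : homogeneousSubmodule σ R (b + 2) →ₗ[R] homogeneousSubmodule σ R b :=
    (laplacian σ R).restrict fun _ hp => hp.laplacian
  set M : homogeneousSubmodule σ R b →ₗ[R] homogeneousSubmodule σ R (b + 2) :=
    (LinearMap.mulLeft R (radiusSq σ R)).restrict fun _ hq => by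
      simpa [add_comm] using isHomogeneous_radiusSq.mul hq
  have hLM : Function.Injective (L ∘ₗ M) := by
    refine (injective_iff_map_eq_zero _).mpr fun q hq => Subtype.ext ?_
    exact eq_zero_of_laplacian_radiusSq_mul_eq_zero (congrArg Subtype.val hq)
  have hL : Function.Surjective L :=
    Function.Surjective.of_comp (f := L) (g := M) (LinearMap.injective_iff_surjective.mp hLM)
  rw [← LinearMap.finrank_range_add_finrank_ker L, LinearMap.range_eq_top.mpr hL, finrank_top,
    show LinearMap.ker L = _ from LinearMap.ker_restrict _, ← Submodule.finrank_map_subtype_eq,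
    Submodule.map_comap_subtype, add_comm]

end Dimension

end MvPolynomial

theorem Nat.prod_Icc_add_eq_ascFactorial (a m : ℕ) :
    ∏ j ∈ Finset.Icc 1 m, (a + j) = (a + 1).ascFactorial m := by
  rw [Nat.ascFactorial_eq_prod_range, ← Finset.Ico_add_one_right_eq_Icc,
    Finset.prod_Ico_eq_prod_range, Nat.add_sub_cancel]
  exact Finset.prod_congr rfl fun j _ => by ring

lemma harmonicHomogeneous_eq (n a : ℕ) :
    harmonicHomogeneous n a =
      homogeneousSubmodule (Fin n) ℝ a ⊓ LinearMap.ker (laplacian (Fin n) ℝ) :=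
  rfl

/-- Dimension formula for the space `H_a` of degree-`a` harmonic polynomials in `n ≥ 3`
variables: `(n−2)! · dim H_a = (2a + n − 2) · ∏_{j=1}^{n−3} (a + j)`. -/
theorem finrank_harmonicHomogeneous (n a : ℕ) (hn : 3 ≤ n) :
    (n - 2).factorial * Module.finrank ℝ (harmonicHomogeneous n a) =
      (2 * a + n - 2) * ∏ j ∈ Finset.Icc 1 (n - 3), (a + j) := by
  obtain ⟨m, rfl⟩ : ∃ m, n = m + 3 := ⟨n - 3, by omega⟩
  have hP := factorial_mul_finrank_homogeneousSubmodule (σ := Fin (m + 3)) (R := ℝ) (k := m + 2)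
    (by simp)
  rw [show m + 3 - 2 = m + 1 by omega, show m + 3 - 3 = m by omega,
    show 2 * a + (m + 3) - 2 = 2 * a + m + 1 by omega, Nat.prod_Icc_add_eq_ascFactorial,
    harmonicHomogeneous_eq]
  refine Nat.eq_of_mul_eq_mul_left (show 0 < m + 2 by omega) ?_
  rw [← mul_assoc, show (m + 2) * (m + 1).factorial = (m + 2).factorial from rfl]
  obtain ha | ⟨c, rfl⟩ : a ≤ 1 ∨ ∃ c, a = c + 2 := by
    rcases a with _ | _ | c <;> simp
  · rw [inf_eq_left.mpr (homogeneousSubmodule_le_ker_laplacian ha), hP, Nat.ascFactorial_succ,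
      Nat.ascFactorial_succ]
    interval_cases a <;> ring_nf
  · have hcount := congrArg ((m + 2).factorial * ·)
      (finrank_harmonic_add_finrank_homogeneousSubmodule (σ := Fin (m + 3)) (R := ℝ) c)
    have hlow : (c + 1).ascFactorial (m + 2) = (c + 1) * (c + 2) * (c + 3).ascFactorial m := by
      rw [add_comm m 2, ← Nat.ascFactorial_mul_ascFactorial, Nat.ascFactorial_succ,
        Nat.ascFactorial_succ, Nat.ascFactorial_zero]
      ring_nf
    have hhigh :
        (c + 3).ascFactorial (m + 2) = (c + m + 4) * (c + m + 3) * (c + 3).ascFactorial m := by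
      rw [Nat.ascFactorial_succ, Nat.ascFactorial_succ]
      ring
    simp only [mul_add, hP, hlow, hhigh] at hcount
    linarith
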